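/- Let 𝒴 be a finite set, let P_test, P_train, and P_noise be probability mass functions on 𝒴 with P_train and P_noise strictly positive on the support of P_test, let ξ ∈ [0,1], and let P_new = (1−ξ)·P_train + ξ·P_noise. Let N be a positive integer and let g : 𝒴 → ℝ be a function that is (R/√N)-subGaussian under P_new. Then the expected generalization error satisfies E_{P_test}[g] − E_{P_new}[g] ≤ √( (2R²/N) · [ (1−ξ)·D_KL(P_test‖P_train) + ξ·D_KL(P_test‖P_noise) ] ). -/
import Mathlib


/-- `P` is a probability mass function on the finite set `𝒴`. -/
def IsPMF {𝒴 : Type*} [Fintype 𝒴] (P : 𝒴 → ℝ) : Prop :=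
  (∀ z, 0 ≤ P z) ∧ ∑ z, P z = 1

/-- KL divergence between probability mass functions on a finite set,
with the convention `0 * log (0 / b) = 0` (automatic in Lean). -/
noncomputable def klDiv {𝒴 : Type*} [Fintype 𝒴] (P Q : 𝒴 → ℝ) : ℝ :=
  ∑ z, P z * Real.log (P z / Q z)

/-- `g` is `R`-subGaussian under the probability mass function `P`:
`E_P[exp (t (g - E_P[g]))] ≤ exp (t² R² / 2)` for all `t`. -/
def IsSubGaussianPMF {𝒴 : Type*} [Fintype 𝒴] (P : 𝒴 → ℝ) (g : 𝒴 → ℝ) (R : ℝ) : Prop :=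
  ∀ t : ℝ, ∑ z, P z * Real.exp (t * (g z - ∑ z', P z' * g z'))
    ≤ Real.exp (t ^ 2 * R ^ 2 / 2)

open Finset in
/-- Finite Donsker–Varadhan inequality. -/
lemma donsker_varadhan_aux {𝒴 : Type*} [Fintype 𝒴] (P Q : 𝒴 → ℝ) (hP : IsPMF P)
    (hQ : ∀ z, 0 ≤ Q z) (hpos : ∀ z, 0 < P z → 0 < Q z) (f : 𝒴 → ℝ) :
    ∑ z, P z * f z ≤ klDiv P Q + Real.log (∑ z, Q z * Real.exp (f z)) := by
  classical
  set S : Finset 𝒴 := Finset.univ.filter (fun z => 0 < P z) with hS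
  have hmemS : ∀ z, z ∈ S ↔ 0 < P z := by intro z; simp [hS]
  have hPz0 : ∀ z, z ∉ S → P z = 0 := fun z hz =>
    le_antisymm (not_lt.mp (fun h => hz ((hmemS z).mpr h))) (hP.1 z)
  have hSsum : ∑ z ∈ S, P z = 1 := by
    rw [← hP.2]
    exact Finset.sum_subset (Finset.subset_univ S) (fun z _ hz => hPz0 z hz)
  have jensen := (strictConcaveOn_log_Ioi.concaveOn).le_map_sum
    (t := S) (w := fun z => P z) (p := fun z => Q z * Real.exp (f z) / P z)
    (fun i _ => hP.1 i) hSsum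
    (fun i hi => by
      have hPi := (hmemS i).mp hi
      have hQi := hpos i hPi
      exact Set.mem_Ioi.mpr (div_pos (mul_pos hQi (Real.exp_pos _)) hPi))
  simp only [smul_eq_mul] at jensen
  -- rewrite the LHS of jensen
  have hL : ∑ z ∈ S, P z * Real.log (Q z * Real.exp (f z) / P z)
      = ∑ z ∈ S, (P z * f z - P z * Real.log (P z / Q z)) := by
    apply Finset.sum_congr rfl
    intro z hz
    have hPz := (hmemS z).mp hz
    have hQz := hpos z hPz
    rw [Real.log_div (by positivity) (ne_of_gt hPz),
      Real.log_mul (ne_of_gt hQz) (Real.exp_ne_zero _), Real.log_exp,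
      Real.log_div (ne_of_gt hPz) (ne_of_gt hQz)]
    ring
  -- rewrite the RHS of jensen
  have hR : ∑ z ∈ S, P z * (Q z * Real.exp (f z) / P z)
      = ∑ z ∈ S, Q z * Real.exp (f z) := by
    apply Finset.sum_congr rfl
    intro z hz
    have hPz := (hmemS z).mp hz
    field_simp
  rw [hL, hR, Finset.sum_sub_distrib] at jensen
  have hsum1 : ∑ z ∈ S, P z * f z = ∑ z, P z * f z :=
    Finset.sum_subset (Finset.subset_univ S) (fun z _ hz => by rw [hPz0 z hz]; ring)
  have hsum2 : ∑ z ∈ S, P z * Real.log (P z / Q z) = klDiv P Q :=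
    Finset.sum_subset (Finset.subset_univ S) (fun z _ hz => by rw [hPz0 z hz]; ring)
  have hSne : S.Nonempty := by
    by_contra h
    rw [Finset.not_nonempty_iff_eq_empty] at h
    rw [h, Finset.sum_empty] at hSsum
    norm_num at hSsum
  have hpossum : 0 < ∑ z ∈ S, Q z * Real.exp (f z) := by
    apply Finset.sum_pos
    · intro i hi
      exact mul_pos (hpos i ((hmemS i).mp hi)) (Real.exp_pos _)
    · exact hSne
  have hmono : Real.log (∑ z ∈ S, Q z * Real.exp (f z))
      ≤ Real.log (∑ z, Q z * Real.exp (f z)) := by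
    apply Real.log_le_log hpossum
    apply Finset.sum_le_sum_of_subset_of_nonneg (Finset.subset_univ S)
    intro z _ _
    exact mul_nonneg (hQ z) (Real.exp_pos _).le
  rw [hsum1, hsum2] at jensen
  linarith

lemma klDiv_nonneg' {𝒴 : Type*} [Fintype 𝒴] (P Q : 𝒴 → ℝ) (hP : IsPMF P) (hQ : IsPMF Q)
    (hpos : ∀ z, 0 < P z → 0 < Q z) : 0 ≤ klDiv P Q := by
  have h := donsker_varadhan_aux P Q hP hQ.1 hpos (fun _ => 0)
  simpa [hQ.2] using h

/-- Theorem 3 (generalization bound with noise ratio): with noise-injected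
training distribution `P_new = (1-ξ) P_train + ξ P_noise`,
`E_{P_test}[g] - E_{P_new}[g] ≤ √((2R²/N)[(1-ξ) D_KL(P_test‖P_train) + ξ D_KL(P_test‖P_noise)])`. -/
theorem generalization_bound_noise {𝒴 : Type*} [Fintype 𝒴]
    (P_test P_train P_noise : 𝒴 → ℝ)
    (htest : IsPMF P_test) (htrain : IsPMF P_train) (hnoise : IsPMF P_noise)
    (hpos₁ : ∀ z, 0 < P_test z → 0 < P_train z)
    (hpos₂ : ∀ z, 0 < P_test z → 0 < P_noise z)
    (ξ : ℝ) (hξ0 : 0 ≤ ξ) (hξ1 : ξ ≤ 1)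
    (N : ℕ) (hN : 0 < N) (g : 𝒴 → ℝ) (R : ℝ)
    (hsub : IsSubGaussianPMF (fun z => (1 - ξ) * P_train z + ξ * P_noise z) g
      (R / Real.sqrt N)) :
    (∑ z, P_test z * g z) - (∑ z, ((1 - ξ) * P_train z + ξ * P_noise z) * g z)
      ≤ Real.sqrt ((2 * R ^ 2 / N) *
          ((1 - ξ) * klDiv P_test P_train + ξ * klDiv P_test P_noise)) := by
  classical
  set Pnew : 𝒴 → ℝ := fun z => (1 - ξ) * P_train z + ξ * P_noise z with hPnewdef
  have hPnn : ∀ z, 0 ≤ Pnew z := fun z =>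
    add_nonneg (mul_nonneg (by linarith) (htrain.1 z)) (mul_nonneg hξ0 (hnoise.1 z))
  have hPsum : ∑ z, Pnew z = 1 := by
    simp only [hPnewdef, Finset.sum_add_distrib, ← Finset.mul_sum, htrain.2, hnoise.2]
    ring
  have hPnewPMF : IsPMF Pnew := ⟨hPnn, hPsum⟩
  have hPnewpos : ∀ z, 0 < P_test z → 0 < Pnew z := by
    intro z hz
    have h1 := hpos₁ z hz
    have h2 := hpos₂ z hz
    have hmin : min (P_train z) (P_noise z) ≤ Pnew z := by
      have : min (P_train z) (P_noise z)
          = (1 - ξ) * min (P_train z) (P_noise z) + ξ * min (P_train z) (P_noise z) := by ring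
      rw [this]
      exact add_le_add
        (mul_le_mul_of_nonneg_left (min_le_left _ _) (by linarith))
        (mul_le_mul_of_nonneg_left (min_le_right _ _) hξ0)
    exact lt_of_lt_of_le (lt_min h1 h2) hmin
  -- KL convexity in second argument
  set K : ℝ := klDiv P_test Pnew with hK
  set D : ℝ := (1 - ξ) * klDiv P_test P_train + ξ * klDiv P_test P_noise with hD
  have hKD : K ≤ D := by
    rw [hK, hD, klDiv, klDiv, klDiv, Finset.mul_sum, Finset.mul_sum,
      ← Finset.sum_add_distrib]
    apply Finset.sum_le_sum
    intro z _
    by_cases hz : 0 < P_test z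
    · have ha := hpos₁ z hz
      have hb := hpos₂ z hz
      have hnz := hPnewpos z hz
      have hmix : (1 - ξ) * Real.log (P_train z) + ξ * Real.log (P_noise z)
          ≤ Real.log (Pnew z) := by
        have := (strictConcaveOn_log_Ioi.concaveOn).2 (Set.mem_Ioi.mpr ha)
          (Set.mem_Ioi.mpr hb) (by linarith : (0:ℝ) ≤ 1 - ξ) hξ0 (by ring)
        simpa [smul_eq_mul] using this
      rw [Real.log_div (ne_of_gt hz) (ne_of_gt hnz),
        Real.log_div (ne_of_gt hz) (ne_of_gt ha),
        Real.log_div (ne_of_gt hz) (ne_of_gt hb)]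
      nlinarith [mul_le_mul_of_nonneg_left hmix hz.le]
    · have : P_test z = 0 := le_antisymm (not_lt.mp hz) (htest.1 z)
      simp [this]
  have hK0 : 0 ≤ K := klDiv_nonneg' _ _ htest hPnewPMF hPnewpos
  have hD0 : 0 ≤ D := le_trans hK0 hKD
  -- key inequality for all t
  set μ : ℝ := ∑ z, Pnew z * g z with hμ
  set Δ : ℝ := (∑ z, P_test z * g z) - μ with hΔ
  have hσ : (R / Real.sqrt N) ^ 2 = R ^ 2 / N := by
    rw [div_pow, Real.sq_sqrt (Nat.cast_nonneg N)]
  have key : ∀ t : ℝ, t * Δ ≤ D + t ^ 2 * (R ^ 2 / N) / 2 := by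
    intro t
    have hdv := donsker_varadhan_aux P_test Pnew htest hPnn hPnewpos
      (fun z => t * (g z - μ))
    have hlhs : ∑ z, P_test z * (t * (g z - μ)) = t * Δ := by
      rw [hΔ]
      rw [Finset.sum_congr rfl (fun z _ => by ring :
        ∀ z ∈ Finset.univ, P_test z * (t * (g z - μ)) = t * (P_test z * g z) - (t * μ) * P_test z)]
      rw [Finset.sum_sub_distrib, ← Finset.mul_sum, ← Finset.mul_sum, htest.2]
      ring
    have hmgf : ∑ z, Pnew z * Real.exp (t * (g z - μ)) ≤ Real.exp (t ^ 2 * (R ^ 2 / N) / 2) := by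
      have h := hsub t
      rw [hσ] at h
      exact h
    have hmgfpos : 0 < ∑ z, Pnew z * Real.exp (t * (g z - μ)) := by
      have hex : ∃ z, 0 < Pnew z := by
        by_contra h
        push_neg at h
        have : ∑ z, Pnew z ≤ 0 := Finset.sum_nonpos (fun z _ => h z)
        rw [hPsum] at this; linarith
      obtain ⟨z0, hz0⟩ := hex
      apply Finset.sum_pos'
      · intro i _; exact mul_nonneg (hPnn i) (Real.exp_pos _).le
      · exact ⟨z0, Finset.mem_univ z0, mul_pos hz0 (Real.exp_pos _)⟩
    have hlog : Real.log (∑ z, Pnew z * Real.exp (t * (g z - μ)))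
        ≤ t ^ 2 * (R ^ 2 / N) / 2 := by
      rw [Real.log_le_iff_le_exp hmgfpos]
      exact hmgf
    rw [hlhs] at hdv
    calc t * Δ ≤ K + Real.log (∑ z, Pnew z * Real.exp (t * (g z - μ))) := hdv
      _ ≤ D + t ^ 2 * (R ^ 2 / N) / 2 := add_le_add hKD hlog
  -- optimize over t
  show Δ ≤ Real.sqrt ((2 * R ^ 2 / N) * D)
  by_cases hΔ0 : Δ ≤ 0
  · exact le_trans hΔ0 (Real.sqrt_nonneg _)
  push_neg at hΔ0
  set s2 : ℝ := R ^ 2 / N with hs2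
  have hs2nn : 0 ≤ s2 := by positivity
  have hgoal_eq : (2 * R ^ 2 / N) * D = 2 * s2 * D := by rw [hs2]; ring
  rw [hgoal_eq]
  rcases eq_or_lt_of_le hs2nn with hs20 | hs2pos
  · exfalso
    have := key ((D + 1) / Δ)
    rw [div_mul_cancel₀ _ (ne_of_gt hΔ0), ← hs20] at this
    linarith
  · have hsq : Δ ^ 2 ≤ 2 * s2 * D := by
      have hk := key (Δ / s2)
      have ht0 : (Δ / s2) * s2 = Δ := div_mul_cancel₀ _ (ne_of_gt hs2pos)
      nlinarith [hk, ht0, hs2pos, sq_nonneg (Δ / s2)]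
    calc Δ = Real.sqrt (Δ ^ 2) := (Real.sqrt_sq hΔ0.le).symm
      _ ≤ Real.sqrt (2 * s2 * D) := Real.sqrt_le_sqrt hsq
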